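/- Let d ≥ 1, p > 0 and let μ be a probability measure supported in (−1,1]^d, with μ_N the empirical measure of an i.i.d. N-sample from μ. Then there exist positive constants C, c depending only on p, d such that for all N ≥ 1 and all x > 0: P(D_p(μ_N,μ) ≥ x) ≤ 1_{x≤1}·C exp(−cNx²) if p > d/2; ≤ 1_{x≤1}·C exp(−cN(x/log(2+1/x))²) if p = d/2; and ≤ 1_{x≤1}·C exp(−cNx^{d/p}) if p ∈ (0, d/2). -/

import Mathlib

/-!
Each level `ℓ` of `D_p(μ_N, μ)` is the sum `Σ_F |μ_N(F) - μ(F)|` over the `2^{dℓ}` cubes of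
`P_ℓ`. It is the maximum, over the `2^{2^{dℓ}}` sign patterns, of an empirical mean of
i.i.d. variables bounded by `1`. Hoeffding's inequality and a union bound therefore give
`P(level ℓ ≥ t) ≤ 2^{2^{dℓ}} exp(-N t² / 2)`.

Levels beyond `L`, where `2^{-pL} ≤ x / 2`, contribute at most `x / 2` deterministically.
On the first `L` levels take thresholds `t_ℓ = κ w 2^{qℓ}` with `2q ≥ d`. The Gaussian
exponent `N t_ℓ² / 2` then absorbs the entropy `2^{dℓ} log 2`, and the weighted thresholds
sum to at most `x / 2`. The three regimes differ only in the size of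
`Σ_{ℓ ≤ L} 2^{(q-p)ℓ}`: it is bounded for `q < p`, equals `L ≈ log (1 / x)` for
`q = p = d / 2`, and is of order `x^{-(q-p)/p}` for `q = d / 2 > p`. This size determines the
rate `w(x)`.
-/

open MeasureTheory ProbabilityTheory Real Set ENNReal NNReal

noncomputable section

/-- `T_p(μ,ν)`: infimum over couplings of `∫ |x-y|^p`. -/
def Tcost (d : ℕ) (p : ℝ) (μ ν : Measure (EuclideanSpace ℝ (Fin d))) : ℝ :=
  sInf { r : ℝ | ∃ ξ : Measure (EuclideanSpace ℝ (Fin d) × EuclideanSpace ℝ (Fin d)),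
    ξ.fst = μ ∧ ξ.snd = ν ∧ r = ∫ z, ‖z.1 - z.2‖ ^ p ∂ξ }

/-- empirical measure of the points `X 0, ..., X (N-1)`. -/
def empMeas (d N : ℕ) (X : ℕ → EuclideanSpace ℝ (Fin d)) : Measure (EuclideanSpace ℝ (Fin d)) :=
  ((N : ℝ≥0∞))⁻¹ • ∑ k ∈ Finset.range N, Measure.dirac (X k)

/-- the cube of the partition `P_ℓ` of `(-1,1]^d` indexed by `k`. -/
def cube (d ℓ : ℕ) (k : Fin d → Fin (2 ^ ℓ)) : Set (EuclideanSpace ℝ (Fin d)) :=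
  {x | ∀ i, x i ∈ Set.Ioc (-1 + (k i : ℝ) * 2 ^ (1 - (ℓ : ℤ)))
    (-1 + ((k i : ℝ) + 1) * 2 ^ (1 - (ℓ : ℤ)))}

/-- `D_p` for measures on `(-1,1]^d`. -/
def DpCpt (d : ℕ) (p : ℝ) (μ ν : Measure (EuclideanSpace ℝ (Fin d))) : ℝ :=
  (2 ^ p - 1) / 2 * ∑' ℓ : ℕ, 2 ^ (-(p * ((ℓ : ℝ) + 1))) *
    ∑ k : Fin d → Fin (2 ^ (ℓ + 1)),
      |(μ (cube d (ℓ + 1) k)).toReal - (ν (cube d (ℓ + 1) k)).toReal|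

/-- the annuli `B_n`. -/
def Bset (d n : ℕ) : Set (EuclideanSpace ℝ (Fin d)) :=
  if n = 0 then {x | ∀ i, x i ∈ Set.Ioc (-1 : ℝ) 1}
  else {x | ∀ i, x i ∈ Set.Ioc (-(2 : ℝ) ^ n) ((2 : ℝ) ^ n)} \
    {x | ∀ i, x i ∈ Set.Ioc (-(2 : ℝ) ^ (n - 1)) ((2 : ℝ) ^ (n - 1))}

/-- `R_{B_n} μ`: image of `μ|_{B_n}/μ(B_n)` by `x ↦ x/2^n`. -/
def Rres (d n : ℕ) (μ : Measure (EuclideanSpace ℝ (Fin d))) :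
    Measure (EuclideanSpace ℝ (Fin d)) :=
  Measure.map (fun x => ((2 : ℝ) ^ n)⁻¹ • x) ((μ (Bset d n))⁻¹ • μ.restrict (Bset d n))

/-- `D_p` for measures on `ℝ^d`. -/
def Dp (d : ℕ) (p : ℝ) (μ ν : Measure (EuclideanSpace ℝ (Fin d))) : ℝ :=
  ∑' n : ℕ, 2 ^ (p * n) *
    (|(μ (Bset d n)).toReal - (ν (Bset d n)).toReal| +
      min (μ (Bset d n)).toReal (ν (Bset d n)).toReal *
        DpCpt d p (Rres d n μ) (Rres d n ν))

/-- `f(x) = (1+x)log(1+x) - x`. -/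
def fBen (x : ℝ) : ℝ := (1 + x) * Real.log (1 + x) - x

/-- `g(x) = (x log x - x + 1) 1_{x ≥ 1}`. -/
def gBen (x : ℝ) : ℝ := if 1 ≤ x then x * Real.log x - x + 1 else 0

section Hoeffding

variable {E Ω : Type*} [MeasurableSpace E] [MeasurableSpace Ω] {μ : Measure E}
  {P : Measure Ω} [IsProbabilityMeasure P] {X : ℕ → Ω → E}

lemma measureReal_sum_comp_sub_integral_ge_le (hX : ∀ i, Measurable (X i))
    (hind : iIndepFun X P) (hlaw : ∀ i, P.map (X i) = μ) {g : E → ℝ} (hg : Measurable g)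
    (hg_le : ∀ y, |g y| ≤ 1) (N : ℕ) {t : ℝ} (ht : 0 ≤ t) :
    P.real {ω | N * t ≤ ∑ i ∈ Finset.range N, (g (X i ω) - ∫ y, g y ∂μ)} ≤
      exp (-(N * t ^ 2 / 2)) := by
  have hsubG : ∀ i, HasSubgaussianMGF (fun ω => g (X i ω) - ∫ y, g y ∂μ) 1 P := by
    intro i
    have hmean : P[g ∘ X i] = ∫ y, g y ∂μ := by
      rw [← hlaw i, integral_map (hX i).aemeasurable hg.aestronglyMeasurable]; rfl
    have h := hasSubgaussianMGF_of_mem_Icc (hg.comp (hX i)).aemeasurable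
      (ae_of_all P fun ω => abs_le.1 (hg_le (X i ω)))
    rw [hmean] at h
    have hc : (‖(1:ℝ) - -1‖₊ / 2) ^ 2 = 1 := by
      rw [show ‖(1:ℝ) - -1‖₊ = 2 by norm_num [← NNReal.coe_inj]]; norm_num
    rwa [hc] at h
  have h := HasSubgaussianMGF.measure_sum_range_ge_le_of_iIndepFun
    (hind.comp (fun i y => g y - ∫ y, g y ∂μ) fun _ => hg.sub_const _)
    (n := N) (fun i _ => hsubG i) (mul_nonneg N.cast_nonneg ht)
  refine h.trans_eq (congrArg exp ?_)
  rcases eq_or_ne (N : ℝ) 0 with hN | hN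
  · simp [hN]
  · field_simp; push_cast; ring

end Hoeffding

section Frequencies

open scoped Function

variable {E Ω ι : Type*} [Fintype ι] {F : ι → Set E}

lemma sum_indicator_one_le_one (hF : Pairwise (Disjoint on F)) (y : E) :
    ∑ k, (F k).indicator (1 : E → ℝ) y ≤ 1 := by
  rw [← Finset.indicator_biUnion_apply _ _ (hF.set_pairwise _)]
  exact indicator_apply_le' (fun _ => le_rfl) (fun _ => zero_le_one)

lemma sum_sub_integral_sum_mul_indicator [MeasurableSpace E] {μ : Measure E} [IsFiniteMeasure μ]
    (hF : ∀ k, MeasurableSet (F k)) (σ : ι → ℝ) (x : ℕ → E) {N : ℕ} (hN : N ≠ 0) :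
    ∑ i ∈ Finset.range N, (∑ k, σ k * (F k).indicator 1 (x i) -
      ∫ y, ∑ k, σ k * (F k).indicator 1 y ∂μ) =
    N * ∑ k, σ k * ((N : ℝ)⁻¹ * ∑ i ∈ Finset.range N, (F k).indicator 1 (x i) - μ.real (F k)) := by
  have hint : ∫ y, ∑ k, σ k * (F k).indicator 1 y ∂μ = ∑ k, σ k * μ.real (F k) := by
    rw [integral_finsetSum _ fun k _ => ((integrable_const 1).indicator (hF k)).const_mul _]
    simp_rw [integral_const_mul, integral_indicator_one (hF _)]
  rw [hint, Finset.sum_sub_distrib, Finset.sum_const, Finset.card_range, nsmul_eq_mul,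
    Finset.sum_comm, Finset.mul_sum, Finset.mul_sum, ← Finset.sum_sub_distrib]
  refine Finset.sum_congr rfl fun k _ => ?_
  rw [← Finset.mul_sum]
  field_simp

variable [DecidableEq ι]

lemma abs_sum_sign_mul_indicator_le_one (hF : Pairwise (Disjoint on F)) (s : Finset ι) (y : E) :
    |∑ k, (if k ∈ s then 1 else -1) * (F k).indicator (1 : E → ℝ) y| ≤ 1 := by
  refine (Finset.abs_sum_le_sum_abs _ _).trans ((Finset.sum_le_sum fun k _ => ?_).trans
    (sum_indicator_one_le_one hF y))
  have hI : 0 ≤ (F k).indicator (1 : E → ℝ) y := indicator_nonneg (fun _ _ => zero_le_one) y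
  split_ifs <;> simp [abs_of_nonneg hI]

lemma exists_sum_sign_mul_eq_sum_abs (a : ι → ℝ) :
    ∃ s : Finset ι, ∑ k, (if k ∈ s then 1 else -1) * a k = ∑ k, |a k| := by
  refine ⟨Finset.univ.filter fun k => 0 ≤ a k, Finset.sum_congr rfl fun k _ => ?_⟩
  by_cases h : 0 ≤ a k
  · simp [h, abs_of_nonneg h]
  · simp [h, abs_of_neg (not_le.1 h)]

variable [MeasurableSpace E] [MeasurableSpace Ω] {μ : Measure E} [IsProbabilityMeasure μ]
  {P : Measure Ω} [IsProbabilityMeasure P] {X : ℕ → Ω → E}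

lemma measureReal_sum_abs_freq_sub_ge_le (hX : ∀ i, Measurable (X i)) (hind : iIndepFun X P)
    (hlaw : ∀ i, P.map (X i) = μ) (hF : ∀ k, MeasurableSet (F k))
    (hdisj : Pairwise (Disjoint on F)) {N : ℕ} (hN : N ≠ 0) {t : ℝ} (ht : 0 ≤ t) :
    P.real {ω | t ≤ ∑ k, |(N : ℝ)⁻¹ * ∑ i ∈ Finset.range N, (F k).indicator 1 (X i ω)
      - μ.real (F k)|} ≤ 2 ^ Fintype.card ι * exp (-(N * t ^ 2 / 2)) := by
  set σ : Finset ι → ι → ℝ := fun s k => if k ∈ s then 1 else -1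
  set g : Finset ι → E → ℝ := fun s y => ∑ k, σ s k * (F k).indicator 1 y
  have hg : ∀ s, Measurable (g s) := fun s =>
    Finset.measurable_sum _ fun k _ => (measurable_const.indicator (hF k)).const_mul _
  have hsum := fun s ω => sum_sub_integral_sum_mul_indicator (μ := μ) hF (σ s) (X · ω) hN
  have hsub : {ω | t ≤ ∑ k, |(N : ℝ)⁻¹ * ∑ i ∈ Finset.range N, (F k).indicator 1 (X i ω)
      - μ.real (F k)|} ⊆
      ⋃ s, {ω | N * t ≤ ∑ i ∈ Finset.range N, (g s (X i ω) - ∫ y, g s y ∂μ)} := by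
    intro ω hω
    obtain ⟨s, hs⟩ := exists_sum_sign_mul_eq_sum_abs fun k =>
      (N : ℝ)⁻¹ * ∑ i ∈ Finset.range N, (F k).indicator 1 (X i ω) - μ.real (F k)
    refine mem_iUnion.2 ⟨s, ?_⟩
    rw [Set.mem_ofPred_eq, hsum, hs]
    exact mul_le_mul_of_nonneg_left hω N.cast_nonneg
  calc _ ≤ _ := measureReal_mono hsub
    _ ≤ ∑ s, P.real {ω | N * t ≤ ∑ i ∈ Finset.range N, (g s (X i ω) - ∫ y, g s y ∂μ)} :=
      measureReal_iUnion_fintype_le _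
    _ ≤ ∑ _s : Finset ι, exp (-(N * t ^ 2 / 2)) := Finset.sum_le_sum fun s _ =>
      measureReal_sum_comp_sub_integral_ge_le hX hind hlaw (hg s)
        (abs_sum_sign_mul_indicator_le_one hdisj s) N ht
    _ = 2 ^ Fintype.card ι * exp (-(N * t ^ 2 / 2)) := by
      rw [Finset.sum_const, Finset.card_univ, Fintype.card_finset, nsmul_eq_mul]; push_cast; rfl

end Frequencies

section Cubes

variable {d : ℕ}

lemma measurableSet_cube (ℓ : ℕ) (k : Fin d → Fin (2 ^ ℓ)) : MeasurableSet (cube d ℓ k) := by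
  have : cube d ℓ k = ⋂ i, (fun x : EuclideanSpace ℝ (Fin d) => x i) ⁻¹'
      Ioc (-1 + (k i : ℝ) * 2 ^ (1 - (ℓ : ℤ))) (-1 + ((k i : ℝ) + 1) * 2 ^ (1 - (ℓ : ℤ))) := by
    ext x; simp [cube]
  rw [this]
  exact .iInter fun i => (EuclideanSpace.proj i).continuous.measurable measurableSet_Ioc

open scoped Function in
lemma pairwise_disjoint_cube (ℓ : ℕ) : Pairwise (Disjoint on cube d ℓ) := by
  intro k k' hkk'
  obtain ⟨i, hi⟩ := Function.ne_iff.1 hkk'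
  have hh : (0 : ℝ) < 2 ^ (1 - (ℓ : ℤ)) := by positivity
  have key : ∀ m m' : Fin (2 ^ ℓ), m < m' → ∀ z : ℝ,
      z ≤ -1 + ((m : ℝ) + 1) * 2 ^ (1 - (ℓ : ℤ)) →
      -1 + (m' : ℝ) * 2 ^ (1 - (ℓ : ℤ)) < z → False := by
    intro m m' hm z h1 h2
    have : (m : ℝ) + 1 ≤ m' := by exact_mod_cast Fin.lt_def.1 hm
    nlinarith
  refine Set.disjoint_left.2 fun x hx hx' => ?_
  rcases lt_or_gt_of_ne hi with h | h
  · exact key _ _ h _ (hx i).2 (hx' i).1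
  · exact key _ _ h _ (hx' i).2 (hx i).1

lemma empMeas_real_apply (N : ℕ) (x : ℕ → EuclideanSpace ℝ (Fin d))
    {F : Set (EuclideanSpace ℝ (Fin d))} (hF : MeasurableSet F) :
    (empMeas d N x).real F = (N : ℝ)⁻¹ * ∑ i ∈ Finset.range N, F.indicator 1 (x i) := by
  have h : ∀ i, (Measure.dirac (x i) F).toReal = F.indicator 1 (x i) := fun i => by
    rw [Measure.dirac_apply' _ hF]; by_cases h : x i ∈ F <;> simp [h]
  rw [measureReal_def, empMeas, Measure.smul_apply, Measure.finsetSum_apply, smul_eq_mul,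
    ENNReal.toReal_mul,
    ENNReal.toReal_sum fun _ _ => measure_ne_top _ _]
  simp only [h, ENNReal.toReal_inv, ENNReal.toReal_natCast]

lemma isProbabilityMeasure_empMeas {N : ℕ} (hN : N ≠ 0) (x : ℕ → EuclideanSpace ℝ (Fin d)) :
    IsProbabilityMeasure (empMeas d N x) := by
  constructor
  simp only [empMeas, Measure.smul_apply, Measure.finsetSum_apply, measure_univ,
    Finset.sum_const, Finset.card_range, nsmul_eq_mul, mul_one, smul_eq_mul]
  exact ENNReal.inv_mul_cancel (Nat.cast_ne_zero.2 hN) (ENNReal.natCast_ne_top N)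

end Cubes

section Discrepancy

variable {d : ℕ}

def cubeDiscrepancy (d ℓ : ℕ) (μ ν : Measure (EuclideanSpace ℝ (Fin d))) : ℝ :=
  ∑ k : Fin d → Fin (2 ^ ℓ), |μ.real (cube d ℓ k) - ν.real (cube d ℓ k)|

lemma cubeDiscrepancy_nonneg (ℓ : ℕ) (μ ν : Measure (EuclideanSpace ℝ (Fin d))) :
    0 ≤ cubeDiscrepancy d ℓ μ ν :=
  Finset.sum_nonneg fun _ _ => abs_nonneg _

lemma sum_measureReal_cube_le_one (ℓ : ℕ) (μ : Measure (EuclideanSpace ℝ (Fin d)))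
    [IsProbabilityMeasure μ] : ∑ k : Fin d → Fin (2 ^ ℓ), μ.real (cube d ℓ k) ≤ 1 := by
  simpa using sum_measureReal_le_measureReal_univ (μ := μ) (fun k _ => measurableSet_cube ℓ k)
    ((pairwise_disjoint_cube ℓ).set_pairwise _)

lemma cubeDiscrepancy_le_two (ℓ : ℕ) (μ ν : Measure (EuclideanSpace ℝ (Fin d)))
    [IsProbabilityMeasure μ] [IsProbabilityMeasure ν] : cubeDiscrepancy d ℓ μ ν ≤ 2 := by
  calc cubeDiscrepancy d ℓ μ ν
      ≤ ∑ k : Fin d → Fin (2 ^ ℓ), (μ.real (cube d ℓ k) + ν.real (cube d ℓ k)) :=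
        Finset.sum_le_sum fun _ _ =>
          (abs_sub _ _).trans_eq (by simp only [abs_of_nonneg measureReal_nonneg])
    _ ≤ 1 + 1 := by
      rw [Finset.sum_add_distrib]
      exact add_le_add (sum_measureReal_cube_le_one ℓ μ) (sum_measureReal_cube_le_one ℓ ν)
    _ = 2 := one_add_one_eq_two

lemma measureReal_cubeDiscrepancy_empMeas_ge_le {μ : Measure (EuclideanSpace ℝ (Fin d))}
    [IsProbabilityMeasure μ] {Ω : Type*} [MeasurableSpace Ω] {P : Measure Ω}
    [IsProbabilityMeasure P] {X : ℕ → Ω → EuclideanSpace ℝ (Fin d)} (hX : ∀ i, Measurable (X i))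
    (hind : iIndepFun X P) (hlaw : ∀ i, P.map (X i) = μ) {N : ℕ} (hN : N ≠ 0) (ℓ : ℕ)
    {t : ℝ} (ht : 0 ≤ t) :
    P.real {ω | t ≤ cubeDiscrepancy d ℓ (empMeas d N fun i => X i ω) μ} ≤
      2 ^ 2 ^ (d * ℓ) * exp (-(N * t ^ 2 / 2)) := by
  have h := measureReal_sum_abs_freq_sub_ge_le hX hind hlaw (measurableSet_cube ℓ)
    (pairwise_disjoint_cube ℓ) hN ht
  simp only [Fintype.card_fun, Fintype.card_fin, ← pow_mul, mul_comm ℓ d] at h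
  simpa only [cubeDiscrepancy, empMeas_real_apply _ _ (measurableSet_cube ℓ _)] using h

end Discrepancy

lemma tsum_pow_succ_mul_le_sum_range_add {r M : ℝ} (hr0 : 0 ≤ r) (hr1 : r < 1) {f : ℕ → ℝ}
    (hf0 : ∀ n, 0 ≤ f n) (hfM : ∀ n, f n ≤ M) (L : ℕ) :
    ∑' n, r ^ (n + 1) * f n ≤
      ∑ n ∈ Finset.range L, r ^ (n + 1) * f n + M * r ^ (L + 1) / (1 - r) := by
  have hle : ∀ n, r ^ (n + 1) * f n ≤ M * r * r ^ n := fun n =>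
    (mul_le_mul_of_nonneg_left (hfM n) (by positivity)).trans_eq (by ring)
  have hgeom := summable_geometric_of_lt_one hr0 hr1
  have hsum : Summable fun n => r ^ (n + 1) * f n :=
    .of_nonneg_of_le (fun n => mul_nonneg (by positivity) (hf0 n)) hle (hgeom.mul_left _)
  rw [← hsum.sum_add_tsum_nat_add L]
  gcongr
  calc ∑' i, r ^ (i + L + 1) * f (i + L) ≤ ∑' i, M * r ^ (L + 1) * r ^ i :=
        Summable.tsum_le_tsum (fun i => (hle (i + L)).trans_eq (by ring))
          ((_root_.summable_nat_add_iff L).2 hsum) (hgeom.mul_left _)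
    _ = M * r ^ (L + 1) / (1 - r) := by
      rw [_root_.tsum_mul_left, tsum_geometric_of_lt_one hr0 hr1, div_eq_mul_inv]

section Chaining

variable {d : ℕ} {p : ℝ}

lemma DpCpt_eq_tsum (μ ν : Measure (EuclideanSpace ℝ (Fin d))) :
    DpCpt d p μ ν = (2 ^ p - 1) / 2 * ∑' ℓ : ℕ, 2 ^ (-(p * ((ℓ : ℝ) + 1))) *
      cubeDiscrepancy d (ℓ + 1) μ ν := rfl

lemma two_rpow_neg_mul_natCast (p : ℝ) (n : ℕ) : (2 : ℝ) ^ (-(p * n)) = (2 ^ (-p)) ^ n := by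
  rw [← Real.rpow_natCast, ← Real.rpow_mul zero_le_two, neg_mul]

lemma DpCpt_le_sum_range_add (hp : 0 < p) (μ ν : Measure (EuclideanSpace ℝ (Fin d)))
    [IsProbabilityMeasure μ] [IsProbabilityMeasure ν] (L : ℕ) :
    DpCpt d p μ ν ≤ (2 ^ p - 1) / 2 * ∑ j ∈ Finset.range L, 2 ^ (-(p * ((j : ℝ) + 1))) *
      cubeDiscrepancy d (j + 1) μ ν + 2 ^ (-(p * L)) := by
  set r : ℝ := 2 ^ (-p) with hr
  have hr0 : 0 < r := by positivity
  have hr1 : r < 1 := Real.rpow_lt_one_of_one_lt_of_neg one_lt_two (neg_lt_zero.2 hp)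
  have h2p : (2 : ℝ) ^ p = r⁻¹ := by rw [hr, Real.rpow_neg zero_le_two, inv_inv]
  have hsucc : ∀ j : ℕ, (2 : ℝ) ^ (-(p * ((j : ℝ) + 1))) = r ^ (j + 1) := fun j => by
    exact_mod_cast two_rpow_neg_mul_natCast p (j + 1)
  rw [DpCpt_eq_tsum, two_rpow_neg_mul_natCast, ← hr]
  simp only [hsucc, h2p]
  have hA : 0 ≤ (r⁻¹ - 1) / 2 := by
    have := one_lt_inv₀ hr0 |>.2 hr1
    linarith
  refine (mul_le_mul_of_nonneg_left (tsum_pow_succ_mul_le_sum_range_add hr0.le hr1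
    (fun ℓ => cubeDiscrepancy_nonneg (ℓ + 1) μ ν) (fun ℓ => cubeDiscrepancy_le_two (ℓ + 1) μ ν)
    L) hA).trans_eq ?_
  have : 1 - r ≠ 0 := (sub_pos.2 hr1).ne'
  field_simp
  ring

lemma DpCpt_le_one (hp : 0 < p) (μ ν : Measure (EuclideanSpace ℝ (Fin d)))
    [IsProbabilityMeasure μ] [IsProbabilityMeasure ν] : DpCpt d p μ ν ≤ 1 := by
  simpa using DpCpt_le_sum_range_add hp μ ν 0

end Chaining

lemma sum_range_pow_succ_le {ρ : ℝ} (h0 : 0 ≤ ρ) (h1 : ρ < 1) (L : ℕ) :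
    ∑ j ∈ Finset.range L, ρ ^ (j + 1) ≤ ρ / (1 - ρ) := by
  have h := geom_sum_Ico_le_of_lt_one (m := 1) (n := L + 1) h0 h1
  rw [Finset.sum_Ico_eq_sum_range, Nat.add_sub_cancel, pow_one] at h
  simpa only [add_comm 1] using h

lemma two_pow_two_pow_mul_exp_le {d : ℕ} (hd : 1 ≤ d) {a b : ℝ} (ha : 2 ^ d ≤ a) (hb : 1 ≤ b)
    (ℓ : ℕ) : (2 : ℝ) ^ 2 ^ (d * ℓ) * exp (-(2 * b * a ^ ℓ)) ≤ exp (-b) * exp (-b) ^ ℓ := by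
  have h2a : 2 ≤ a := le_trans (by simpa using pow_le_pow_right₀ one_le_two hd) ha
  have hgrow : 1 + ℓ ≤ a ^ ℓ := by
    have h := one_add_mul_le_pow (by norm_num : (-2 : ℝ) ≤ 1) ℓ
    rw [mul_one, one_add_one_eq_two] at h
    exact h.trans (pow_le_pow_left₀ zero_le_two h2a ℓ)
  -- the number of sign patterns is absorbed by half of the Gaussian exponent
  have hentropy : (2 : ℝ) ^ 2 ^ (d * ℓ) ≤ exp (b * a ^ ℓ) := by
    have hcount : ((2 ^ (d * ℓ) : ℕ) : ℝ) ≤ a ^ ℓ := by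
      push_cast; rw [pow_mul]; exact pow_le_pow_left₀ (by positivity) ha ℓ
    calc (2 : ℝ) ^ 2 ^ (d * ℓ) = exp (((2 ^ (d * ℓ) : ℕ) : ℝ) * Real.log 2) := by
          rw [exp_nat_mul, exp_log two_pos]
      _ ≤ exp (b * a ^ ℓ) := by
        have hlog : Real.log 2 ≤ 1 := by have := Real.log_two_lt_d9; linarith
        refine exp_le_exp.2 ?_
        calc ((2 ^ (d * ℓ) : ℕ) : ℝ) * Real.log 2 ≤ a ^ ℓ * 1 :=
              mul_le_mul hcount hlog (Real.log_nonneg one_le_two) (by positivity)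
          _ ≤ b * a ^ ℓ := by nlinarith [pow_nonneg (zero_le_two.trans h2a) ℓ]
  calc (2 : ℝ) ^ 2 ^ (d * ℓ) * exp (-(2 * b * a ^ ℓ))
      ≤ exp (b * a ^ ℓ) * exp (-(2 * b * a ^ ℓ)) := by gcongr
    _ = exp (-(b * a ^ ℓ)) := by rw [← exp_add]; ring_nf
    _ ≤ exp (-(b * (1 + ℓ))) := by gcongr
    _ = exp (-b) * exp (-b) ^ ℓ := by rw [← exp_nat_mul, ← exp_add]; ring_nf

lemma sum_two_pow_two_pow_mul_exp_le {d : ℕ} (hd : 1 ≤ d) {a b : ℝ} (ha : 2 ^ d ≤ a)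
    (hb : 1 ≤ b) (L : ℕ) :
    ∑ j ∈ Finset.range L, (2 : ℝ) ^ 2 ^ (d * (j + 1)) * exp (-(2 * b * a ^ (j + 1))) ≤
      exp (-b) := by
  set ρ := exp (-b)
  have hρ0 : 0 ≤ ρ := (exp_pos _).le
  have hρ : ρ ≤ 1 / 2 := by
    have := Real.exp_one_gt_d9
    calc ρ ≤ exp (-1) := exp_le_exp.2 (neg_le_neg hb)
      _ ≤ 1 / 2 := by rw [exp_neg, one_div]; exact inv_anti₀ two_pos (by linarith)
  calc _ ≤ ∑ j ∈ Finset.range L, ρ * ρ ^ (j + 1) :=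
        Finset.sum_le_sum fun j _ => two_pow_two_pow_mul_exp_le hd ha hb (j + 1)
    _ ≤ ρ * (ρ / (1 - ρ)) := by
      rw [← Finset.mul_sum]; gcongr; exact sum_range_pow_succ_le hρ0 (by linarith) L
    _ ≤ ρ * 1 := by gcongr; rw [div_le_one (by linarith)]; linarith
    _ = ρ := mul_one ρ

section Concentration

variable {d : ℕ} {p : ℝ}

lemma two_rpow_sub_one_pos (hp : 0 < p) : 0 < (2 : ℝ) ^ p - 1 :=
  sub_pos.2 (Real.one_lt_rpow one_lt_two hp)

lemma DpCpt_lt_of_cubeDiscrepancy_lt (hp : 0 < p) (μ ν : Measure (EuclideanSpace ℝ (Fin d)))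
    [IsProbabilityMeasure μ] [IsProbabilityMeasure ν] {L : ℕ} (hL : L ≠ 0) {t : ℕ → ℝ}
    (ht : ∀ j < L, cubeDiscrepancy d (j + 1) μ ν < t j) :
    DpCpt d p μ ν < (2 ^ p - 1) / 2 * ∑ j ∈ Finset.range L, 2 ^ (-(p * ((j : ℝ) + 1))) * t j +
      2 ^ (-(p * L)) := by
  have hA : (0 : ℝ) < (2 ^ p - 1) / 2 := half_pos (two_rpow_sub_one_pos hp)
  refine (DpCpt_le_sum_range_add hp μ ν L).trans_lt (add_lt_add_left ?_ _)
  refine mul_lt_mul_of_pos_left (Finset.sum_lt_sum_of_nonempty (Finset.nonempty_range_iff.2 hL)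
    fun j hj => mul_lt_mul_of_pos_left (ht j (Finset.mem_range.1 hj)) (by positivity)) hA

lemma two_rpow_neg_mul_mul_pow (p q s : ℝ) (j : ℕ) :
    (2 : ℝ) ^ (-(p * ((j : ℝ) + 1))) * (s * (2 ^ q) ^ (j + 1)) = s * (2 ^ (q - p)) ^ (j + 1) := by
  have h := two_rpow_neg_mul_natCast p (j + 1)
  push_cast at h
  rw [h, sub_eq_neg_add, Real.rpow_add two_pos, mul_pow]
  ring

theorem measureReal_DpCpt_ge_le (hd : 1 ≤ d) (hp : 0 < p) {q : ℝ} (hq : d ≤ 2 * q)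
    {μ : Measure (EuclideanSpace ℝ (Fin d))} [IsProbabilityMeasure μ] {Ω : Type*}
    [MeasurableSpace Ω] {P : Measure Ω} [IsProbabilityMeasure P]
    {X : ℕ → Ω → EuclideanSpace ℝ (Fin d)} (hX : ∀ i, Measurable (X i)) (hind : iIndepFun X P)
    (hlaw : ∀ i, P.map (X i) = μ) {N : ℕ} (hN : N ≠ 0) {x s : ℝ} (hs : 0 ≤ s) {L : ℕ}
    (hL : L ≠ 0)
    (hchain : (2 ^ p - 1) / 2 * (s * ∑ j ∈ Finset.range L, (2 ^ (q - p)) ^ (j + 1)) +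
      2 ^ (-(p * L)) ≤ x) :
    P.real {ω | x ≤ DpCpt d p (empMeas d N fun i => X i ω) μ} ≤ exp (1 - N * s ^ 2 / 4) := by
  set b := N * s ^ 2 / 4
  rcases lt_or_ge b 1 with hb | hb
  · exact measureReal_le_one.trans (Real.one_le_exp (by linarith))
  set t : ℕ → ℝ := fun j => s * (2 ^ q) ^ (j + 1)
  have hsub : {ω | x ≤ DpCpt d p (empMeas d N fun i => X i ω) μ} ⊆
      ⋃ j ∈ Finset.range L,
        {ω | t j ≤ cubeDiscrepancy d (j + 1) (empMeas d N fun i => X i ω) μ} := by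
    intro ω hω
    by_contra h
    simp only [mem_iUnion, Finset.mem_range, Set.mem_ofPred_eq, not_exists, not_le] at h
    have := isProbabilityMeasure_empMeas hN fun i => X i ω
    have hlt := DpCpt_lt_of_cubeDiscrepancy_lt hp _ μ hL h
    simp only [t, two_rpow_neg_mul_mul_pow, ← Finset.mul_sum] at hlt
    exact absurd hω (not_le.2 (hlt.trans_le hchain))
  have h2q : (2 : ℝ) ^ d ≤ (2 ^ q) ^ 2 := by
    rw [← Real.rpow_natCast, ← Real.rpow_mul_natCast zero_le_two]
    exact Real.rpow_le_rpow_of_exponent_le one_le_two (by push_cast; linarith)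
  calc P.real _ ≤ P.real (⋃ j ∈ Finset.range L,
        {ω | t j ≤ cubeDiscrepancy d (j + 1) (empMeas d N fun i => X i ω) μ}) :=
        measureReal_mono hsub (measure_ne_top P _)
    _ ≤ ∑ j ∈ Finset.range L,
        P.real {ω | t j ≤ cubeDiscrepancy d (j + 1) (empMeas d N fun i => X i ω) μ} :=
      measureReal_biUnion_finset_le _ _
    _ ≤ ∑ j ∈ Finset.range L, (2 : ℝ) ^ 2 ^ (d * (j + 1)) * exp (-(N * t j ^ 2 / 2)) :=
      Finset.sum_le_sum fun j _ =>
        measureReal_cubeDiscrepancy_empMeas_ge_le hX hind hlaw hN (j + 1) (by positivity)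
    _ = ∑ j ∈ Finset.range L,
          (2 : ℝ) ^ 2 ^ (d * (j + 1)) * exp (-(2 * b * ((2 ^ q) ^ 2) ^ (j + 1))) := by
      simp only [t, b]; ring_nf
    _ ≤ exp (-b) := sum_two_pow_two_pow_mul_exp_le hd h2q hb L
    _ ≤ exp (1 - b) := exp_le_exp.2 (by linarith)

end Concentration

lemma exists_two_rpow_mul_le {p x : ℝ} (hp : 0 < p) (hx0 : 0 < x) (hx1 : x ≤ 1) :
    ∃ L : ℕ, L ≠ 0 ∧ (2 : ℝ) ^ (-(p * L)) ≤ x / 2 ∧ (2 : ℝ) ^ (p * L) ≤ 2 ^ (p + 1) / x := by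
  set y := Real.logb 2 (2 / x) / p
  have hpy : (2 : ℝ) ^ (p * y) = 2 / x := by
    rw [mul_div_cancel₀ _ hp.ne', Real.rpow_logb two_pos (by norm_num) (by positivity)]
  have hy : 0 < y := div_pos (Real.logb_pos one_lt_two ((one_lt_div hx0).2 (by linarith))) hp
  refine ⟨⌈y⌉₊, (Nat.ceil_pos.2 hy).ne', ?_, ?_⟩
  · have h : 2 / x ≤ (2 : ℝ) ^ (p * ⌈y⌉₊) := hpy ▸
      Real.rpow_le_rpow_of_exponent_le one_le_two (mul_le_mul_of_nonneg_left (Nat.le_ceil y) hp.le)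
    rw [Real.rpow_neg zero_le_two, ← inv_div]
    exact inv_anti₀ (by positivity) h
  · calc (2 : ℝ) ^ (p * ⌈y⌉₊) ≤ 2 ^ (p * (y + 1)) :=
          Real.rpow_le_rpow_of_exponent_le one_le_two
            (mul_le_mul_of_nonneg_left (Nat.ceil_lt_add_one hy.le).le hp.le)
      _ = 2 ^ (p + 1) / x := by
        rw [mul_add, mul_one, Real.rpow_add two_pos, hpy, Real.rpow_add two_pos, Real.rpow_one]
        ring

/-- `w` is an admissible rate for chaining with thresholds `κ w(x) 2^{qℓ}` at level `ℓ`: some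
level `L` makes the truncation error at most `x / 2`, and the weighted thresholds sum to `O(x)`. -/
def IsChainingRate (p q K : ℝ) (w : ℝ → ℝ) : Prop :=
  ∀ x, 0 < x → x ≤ 1 → 0 ≤ w x ∧ ∃ L : ℕ, L ≠ 0 ∧ (2 : ℝ) ^ (-(p * L)) ≤ x / 2 ∧
    w x * ∑ j ∈ Finset.range L, (2 ^ (q - p)) ^ (j + 1) ≤ K * x

section Rates

variable {p q : ℝ}

lemma isChainingRate_id (hp : 0 < p) (hq : q < p) :
    ∃ K > 0, IsChainingRate p q K id := by
  set u : ℝ := 2 ^ (q - p)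
  have hu0 : 0 < u := by positivity
  have hu1 : u < 1 := Real.rpow_lt_one_of_one_lt_of_neg one_lt_two (sub_neg.2 hq)
  refine ⟨u / (1 - u), div_pos hu0 (sub_pos.2 hu1), fun x hx0 hx1 => ⟨hx0.le, ?_⟩⟩
  obtain ⟨L, hL, hLx, -⟩ := exists_two_rpow_mul_le hp hx0 hx1
  refine ⟨L, hL, hLx, ?_⟩
  rw [mul_comm _ x]
  exact mul_le_mul_of_nonneg_left (sum_range_pow_succ_le hu0.le hu1 L) hx0.le

lemma isChainingRate_div_log (hp : 0 < p) :
    ∃ K > 0, IsChainingRate p p K fun x => x / Real.log (2 + 1 / x) := by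
  have hlog2 := Real.log_pos one_lt_two
  refine ⟨(p + 2) / (p * Real.log 2), by positivity, fun x hx0 hx1 => ?_⟩
  have hlog : Real.log 2 ≤ Real.log (2 + 1 / x) :=
    Real.log_le_log two_pos (by linarith [one_div_pos.2 hx0])
  have hlog' : -Real.log x ≤ Real.log (2 + 1 / x) := by
    rw [← Real.log_inv, ← one_div]
    exact Real.log_le_log (by positivity) (by linarith)
  have hlpos : 0 < Real.log (2 + 1 / x) := hlog2.trans_le hlog
  refine ⟨by positivity, ?_⟩
  obtain ⟨L, hL, hLx, hLx'⟩ := exists_two_rpow_mul_le hp hx0 hx1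
  refine ⟨L, hL, hLx, ?_⟩
  have hL_log : L ≤ (p + 2) / (p * Real.log 2) * Real.log (2 + 1 / x) := by
    have h := Real.log_le_log (by positivity) hLx'
    rw [Real.log_rpow two_pos, Real.log_div (by positivity) hx0.ne', Real.log_rpow two_pos] at h
    rw [div_mul_eq_mul_div, le_div_iff₀ (by positivity)]
    nlinarith
  simp only [sub_self, Real.rpow_zero, one_pow, Finset.sum_const, Finset.card_range,
    nsmul_eq_mul, mul_one]
  calc x / Real.log (2 + 1 / x) * L
      ≤ x / Real.log (2 + 1 / x) * ((p + 2) / (p * Real.log 2) * Real.log (2 + 1 / x)) := by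
        gcongr
    _ = (p + 2) / (p * Real.log 2) * x := by
        rw [mul_left_comm, div_mul_cancel₀ _ hlpos.ne', mul_comm]

lemma isChainingRate_rpow (hp : 0 < p) (hq : p < q) :
    ∃ K > 0, IsChainingRate p q K fun x => x ^ (q / p) := by
  set u : ℝ := 2 ^ (q - p)
  set e := (q - p) / p
  have hu1 : 1 < u := Real.one_lt_rpow one_lt_two (sub_pos.2 hq)
  have he : 0 ≤ e := div_nonneg (sub_pos.2 hq).le hp.le
  refine ⟨u / (u - 1) * (2 ^ (p + 1)) ^ e, by have := sub_pos.2 hu1; positivity,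
    fun x hx0 hx1 => ⟨by positivity, ?_⟩⟩
  obtain ⟨L, hL, hLx, hLx'⟩ := exists_two_rpow_mul_le hp hx0 hx1
  refine ⟨L, hL, hLx, ?_⟩
  have hgeom : ∑ j ∈ Finset.range L, u ^ (j + 1) ≤ u / (u - 1) * u ^ L := by
    simp_rw [pow_succ, ← Finset.sum_mul, geom_sum_eq hu1.ne' L]
    rw [div_mul_eq_mul_div, div_mul_eq_mul_div, div_le_div_iff_of_pos_right (sub_pos.2 hu1)]
    nlinarith
  have huL : u ^ L ≤ (2 ^ (p + 1)) ^ e / x ^ e := by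
    rw [← Real.div_rpow (by positivity) hx0.le, ← Real.rpow_mul_natCast zero_le_two]
    calc (2 : ℝ) ^ ((q - p) * L) = (2 ^ (p * L)) ^ e := by
          rw [← Real.rpow_mul zero_le_two]; congr 1; simp only [e]; field_simp
      _ ≤ _ := Real.rpow_le_rpow (by positivity) hLx' he
  have hxe : x ^ (q / p) / x ^ e = x := by
    rw [← Real.rpow_sub hx0, show q / p - e = 1 by simp only [e]; field_simp; ring, Real.rpow_one]
  calc x ^ (q / p) * ∑ j ∈ Finset.range L, u ^ (j + 1)
      ≤ x ^ (q / p) * (u / (u - 1) * ((2 ^ (p + 1)) ^ e / x ^ e)) := by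
        gcongr
        exact hgeom.trans (by gcongr)
    _ = u / (u - 1) * (2 ^ (p + 1)) ^ e * (x ^ (q / p) / x ^ e) := by ring
    _ = u / (u - 1) * (2 ^ (p + 1)) ^ e * x := by rw [hxe]

end Rates

theorem measure_DpCpt_ge_le_of_isChainingRate {d : ℕ} (hd : 1 ≤ d) {p q K : ℝ} (hp : 0 < p)
    (hq : d ≤ 2 * q) (hK : 0 < K) {w : ℝ → ℝ} (hw : IsChainingRate p q K w)
    {μ : Measure (EuclideanSpace ℝ (Fin d))} [IsProbabilityMeasure μ] {Ω : Type*}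
    [MeasurableSpace Ω] {P : Measure Ω} [IsProbabilityMeasure P]
    {X : ℕ → Ω → EuclideanSpace ℝ (Fin d)} (hX : ∀ i, Measurable (X i)) (hind : iIndepFun X P)
    (hlaw : ∀ i, P.map (X i) = μ) {N : ℕ} (hN : N ≠ 0) {x : ℝ} (hx : 0 < x) :
    P {ω | x ≤ DpCpt d p (empMeas d N fun i => X i ω) μ} ≤ ENNReal.ofReal (if x ≤ 1 then
      exp 1 * exp (-(((2 ^ p - 1) * K)⁻¹ ^ 2 / 4 * N * w x ^ 2)) else 0) := by
  split_ifs with hx1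
  · obtain ⟨hw0, L, hL, hLx, hG⟩ := hw x hx hx1
    set κ := ((2 ^ p - 1) * K)⁻¹
    have hA := two_rpow_sub_one_pos hp
    have hchain : (2 ^ p - 1) / 2 * (κ * w x * ∑ j ∈ Finset.range L, (2 ^ (q - p)) ^ (j + 1)) +
        2 ^ (-(p * L)) ≤ x := by
      calc _ ≤ (2 ^ p - 1) / 2 * κ * (K * x) + x / 2 := by
            rw [mul_assoc κ, ← mul_assoc]; gcongr
        _ = x := by simp only [κ]; field_simp; ring
    rw [← ofReal_measureReal]
    refine ENNReal.ofReal_le_ofReal ((measureReal_DpCpt_ge_le hd hp hq hX hind hlaw hN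
      (by positivity) hL hchain).trans_eq ?_)
    rw [← exp_add]
    ring_nf
  · have hempty : {ω | x ≤ DpCpt d p (empMeas d N fun i => X i ω) μ} = ∅ := by
      refine eq_empty_of_forall_notMem fun ω hω => hx1 ?_
      have := isProbabilityMeasure_empMeas hN fun i => X i ω
      exact le_trans hω (DpCpt_le_one hp _ μ)
    simp [hempty]

/-- Proposition 10 of Fournier-Guillin: concentration of `D_p(μ_N, μ)` for a
probability measure supported in `(-1,1]^d`. -/
theorem compact_Dp_concentration (d : ℕ) (hd : 1 ≤ d) (p : ℝ) (hp : 0 < p) :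
    ∃ C c : ℝ, 0 < C ∧ 0 < c ∧
      ∀ μ : Measure (EuclideanSpace ℝ (Fin d)), IsProbabilityMeasure μ →
        μ (Bset d 0) = 1 →
      ∀ (Ω : Type) (_ : MeasurableSpace Ω) (P : Measure Ω), IsProbabilityMeasure P →
      ∀ X : ℕ → Ω → EuclideanSpace ℝ (Fin d),
        (∀ k, Measurable (X k)) →
        iIndepFun X P →
        (∀ k, Measure.map (X k) P = μ) →
      ∀ N : ℕ, 1 ≤ N → ∀ x : ℝ, 0 < x →
        (((d : ℝ) / 2 < p →
          P {ω | x ≤ DpCpt d p (empMeas d N fun k => X k ω) μ} ≤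
            ENNReal.ofReal (if x ≤ 1 then C * Real.exp (-(c * N * x ^ 2)) else 0)) ∧
        (p = (d : ℝ) / 2 →
          P {ω | x ≤ DpCpt d p (empMeas d N fun k => X k ω) μ} ≤
            ENNReal.ofReal (if x ≤ 1 then
              C * Real.exp (-(c * N * (x / Real.log (2 + 1 / x)) ^ 2)) else 0)) ∧
        (0 < p ∧ p < (d : ℝ) / 2 →
          P {ω | x ≤ DpCpt d p (empMeas d N fun k => X k ω) μ} ≤
            ENNReal.ofReal (if x ≤ 1 then
              C * Real.exp (-(c * N * x ^ ((d : ℝ) / p))) else 0))) := by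
  have hA := two_rpow_sub_one_pos hp
  rcases lt_trichotomy p (d / 2) with hpd | hpd | hpd
  · obtain ⟨K, hK, hw⟩ := isChainingRate_rpow hp hpd
    refine ⟨exp 1, ((2 ^ p - 1) * K)⁻¹ ^ 2 / 4, exp_pos 1, by positivity,
      fun μ _ _ Ω _ P _ X hX hind hlaw N hN x hx => ⟨fun h => absurd h (by linarith),
        fun h => absurd h (by linarith), fun _ => ?_⟩⟩
    have hsq : (x ^ ((d : ℝ) / 2 / p)) ^ 2 = x ^ ((d : ℝ) / p) := by
      rw [← Real.rpow_natCast, ← Real.rpow_mul hx.le]; ring_nf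
    simpa only [hsq] using measure_DpCpt_ge_le_of_isChainingRate hd hp (by linarith) hK hw
      hX hind hlaw (Nat.one_le_iff_ne_zero.1 hN) hx
  · obtain ⟨K, hK, hw⟩ := isChainingRate_div_log hp
    refine ⟨exp 1, ((2 ^ p - 1) * K)⁻¹ ^ 2 / 4, exp_pos 1, by positivity,
      fun μ _ _ Ω _ P _ X hX hind hlaw N hN x hx => ⟨fun h => absurd h (by linarith),
        fun _ => ?_, fun h => absurd h.2 (by linarith)⟩⟩
    exact measure_DpCpt_ge_le_of_isChainingRate hd hp (by linarith) hK hw hX hind hlaw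
      (Nat.one_le_iff_ne_zero.1 hN) hx
  · obtain ⟨K, hK, hw⟩ := isChainingRate_id hp (q := (p + d / 2) / 2) (by linarith)
    refine ⟨exp 1, ((2 ^ p - 1) * K)⁻¹ ^ 2 / 4, exp_pos 1, by positivity,
      fun μ _ _ Ω _ P _ X hX hind hlaw N hN x hx => ⟨fun _ => ?_,
        fun h => absurd h (by linarith), fun h => absurd h.2 (by linarith)⟩⟩
    exact measure_DpCpt_ge_le_of_isChainingRate hd hp (by linarith) hK hw hX hind hlaw
      (Nat.one_le_iff_ne_zero.1 hN) hx

end
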